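/- There exists a simple graph E_1 on 7 vertices such that E_1 is not isomorphic to its complement, E_1 and its complement are not cospectral, and E(E_1) = E(complement of E_1) = 5 + √17. -/

import Mathlib

/-!
`graphE₁` is `K₄` on `{0, 1, 2, 3}` with a triangle glued onto each of the edges `01` and `23`,
plus an isolated vertex. It has 10 of the 21 possible edges, so it is not isomorphic to its
complement; indeed no graph on 7 vertices is, since 21 is odd. The characteristic polynomials of
the graph and of its complement are
  `x (x - 1) (x + 1)² (x + 2) (x² - 3x - 2)`  and  `x² (x - 1) (x + 2)² (x² - 3x - 2)`.
They differ, but in both the linear factors contribute `5` to the energy and the roots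
`(3 ± √17) / 2` of `x² - 3x - 2` contribute `√17`.

Over `ℤ`, a monic polynomial of degree 7 is pinned down by its values at `0, …, 6`, so each
characteristic polynomial is certified by seven integer determinants, computed in the kernel.
-/

open Polynomial

/-- Adjacency matrix over ℝ, using classical instances. -/
noncomputable def adjMat {V : Type*} [Finite V] (G : SimpleGraph V) : Matrix V V ℝ :=
  letI := Fintype.ofFinite V
  letI := Classical.decEq V
  letI := Classical.decRel G.Adj
  G.adjMatrix ℝ

/-- The energy of a graph: the sum of the absolute values of the eigenvalues of its
adjacency matrix (equivalently, of the roots of its characteristic polynomial, with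
multiplicity, which all are real since the matrix is real symmetric). -/
noncomputable def energy {V : Type*} [Finite V] (G : SimpleGraph V) : ℝ :=
  letI := Fintype.ofFinite V
  letI := Classical.decEq V
  (((adjMat G).charpoly).roots.map (fun x => |x|)).sum

open Finset in
theorem SimpleGraph.card_edgeFinset_add_card_edgeFinset_compl {V : Type*} [Fintype V]
    [DecidableEq V] (G : SimpleGraph V) [DecidableRel G.Adj] :
    #G.edgeFinset + #Gᶜ.edgeFinset = (Fintype.card V).choose 2 := by
  rw [← card_union_of_disjoint (disjoint_edgeFinset.mpr disjoint_compl_right), ← edgeFinset_sup,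
    ← card_edgeFinset_top_eq_card_choose_two]
  congr!
  exact sup_compl_eq_top

theorem SimpleGraph.not_nonempty_iso_compl_of_odd {V : Type*} [Fintype V] (G : SimpleGraph V)
    (h : Odd ((Fintype.card V).choose 2)) : ¬ Nonempty (G ≃g Gᶜ) := by
  classical
  rintro ⟨f⟩
  rw [← G.card_edgeFinset_add_card_edgeFinset_compl, ← f.card_edgeFinset_eq] at h
  exact Nat.not_odd_iff_even.mpr (Even.add_self _) h

namespace Matrix

variable {R : Type*} [CommRing R] [DecidableEq R]

/-- Unlike `Matrix.det`, a sum over all permutations, this reduces efficiently in the kernel. -/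
def detLaplace : {n : ℕ} → Matrix (Fin n) (Fin n) R → R
  | 0, _ => 1
  | n + 1, M => ∑ j : Fin (n + 1), if M 0 j = 0 then 0 else
      (-1) ^ (j : ℕ) * M 0 j * detLaplace (M.submatrix Fin.succ j.succAbove)

theorem detLaplace_eq_det {n : ℕ} (M : Matrix (Fin n) (Fin n) R) : M.detLaplace = M.det := by
  induction n with
  | zero => simp [detLaplace]
  | succ n ih =>
    rw [detLaplace, det_succ_row_zero]
    refine Finset.sum_congr rfl fun j _ => ?_
    split_ifs with h <;> simp [h, ih]

theorem charpoly_eq_of_detLaplace_eq [IsDomain R] [CharZero R] {n : ℕ}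
    (M : Matrix (Fin n) (Fin n) R) {q : R[X]} (hq : q.Monic) (hdeg : q.natDegree = n)
    (h : ∀ i : Fin n, (scalar (Fin n) (i : R) - M).detLaplace = q.eval (i : R)) :
    M.charpoly = q := by
  have hdeg_sub : (M.charpoly - q).degree < n := by
    have hcharpoly : M.charpoly.degree = n := by simp
    refine hcharpoly ▸ degree_sub_lt_left ?_ M.charpoly_monic.ne_zero ?_
    · rw [hcharpoly, degree_eq_natDegree hq.ne_zero, hdeg]
    · rw [M.charpoly_monic.leadingCoeff, hq.leadingCoeff]
  have hcast : Function.Injective fun i : Fin n => (i : R) :=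
    Nat.cast_injective.comp Fin.val_injective
  refine eq_of_degree_sub_lt_of_eval_finset_eq (Finset.univ.image fun i : Fin n => (i : R)) ?_ ?_
  · rwa [Finset.card_image_of_injective _ hcast, Finset.card_fin]
  · simp only [Finset.mem_image, Finset.mem_univ, true_and, forall_exists_index,
      forall_apply_eq_imp_iff]
    intro i
    rw [eval_charpoly, ← detLaplace_eq_det, h]

end Matrix

theorem charpoly_adjMat_eq_map {V : Type*} [Fintype V] [DecidableEq V] (G : SimpleGraph V)
    [DecidableRel G.Adj] :
    (adjMat G).charpoly = (G.adjMatrix ℤ).charpoly.map (Int.castRingHom ℝ) := by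
  rw [← Matrix.charpoly_map]
  congr 1
  ext i j
  simp [adjMat, SimpleGraph.adjMatrix_apply]

theorem energy_eq_sum_abs_of_charpoly_eq {V : Type*} [Fintype V] [DecidableEq V] (G : SimpleGraph V)
    {s : Multiset ℝ} (h : (adjMat G).charpoly = (s.map fun a => X - C a).prod) :
    energy G = (s.map abs).sum := by
  rw [← roots_multiset_prod_X_sub_C s, ← h, energy]
  congr!

def graphE₁ : SimpleGraph (Fin 7) :=
  SimpleGraph.fromRel fun i j =>
    (i, j) ∈ [(0, 1), (0, 2), (0, 3), (1, 2), (1, 3), (2, 3), (0, 4), (1, 4), (2, 5), (3, 5)]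

instance : DecidableRel graphE₁.Adj :=
  inferInstanceAs (DecidableRel (SimpleGraph.fromRel _).Adj)

theorem charpoly_adjMatrix_graphE₁ : (graphE₁.adjMatrix ℤ).charpoly =
    X * (X - 1) * (X + 1) ^ 2 * (X + 2) * (X ^ 2 - 3 * X - 2) := by
  refine Matrix.charpoly_eq_of_detLaplace_eq _ (by monicity!) (by compute_degree!) ?_
  have h : ∀ i : Fin 7, (Matrix.scalar (Fin 7) (i : ℤ) - graphE₁.adjMatrix ℤ).detLaplace
      = i * (i - 1) * (i + 1) ^ 2 * (i + 2) * (i ^ 2 - 3 * i - 2) := by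
    decide +kernel
  simpa using h

theorem charpoly_adjMatrix_compl_graphE₁ : (graphE₁ᶜ.adjMatrix ℤ).charpoly =
    X ^ 2 * (X - 1) * (X + 2) ^ 2 * (X ^ 2 - 3 * X - 2) := by
  refine Matrix.charpoly_eq_of_detLaplace_eq _ (by monicity!) (by compute_degree!) ?_
  have h : ∀ i : Fin 7, (Matrix.scalar (Fin 7) (i : ℤ) - graphE₁ᶜ.adjMatrix ℤ).detLaplace
      = i ^ 2 * (i - 1) * (i + 2) ^ 2 * (i ^ 2 - 3 * i - 2) := by
    decide +kernel
  simpa using h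

noncomputable def quadraticRoots : Multiset ℝ := {(3 + √17) / 2, (3 - √17) / 2}

theorem prod_X_sub_C_quadraticRoots :
    (quadraticRoots.map fun a => X - C a).prod = X ^ 2 - 3 * X - 2 := by
  have hsum : C ((3 + √17) / 2) + C ((3 - √17) / 2) = (3 : ℝ[X]) := by
    rw [← map_add, ← map_ofNat C]
    congr 1
    ring
  have hprod : C ((3 + √17) / 2) * C ((3 - √17) / 2) = (-2 : ℝ[X]) := by
    rw [← map_mul, ← map_ofNat C, ← map_neg]
    congr 1
    linear_combination (-1 / 4 : ℝ) * Real.sq_sqrt (show (0 : ℝ) ≤ 17 by norm_num)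
  simp only [quadraticRoots, Multiset.insert_eq_cons, Multiset.map_cons, Multiset.map_singleton,
    Multiset.prod_cons, Multiset.prod_singleton]
  linear_combination hprod - X * hsum

theorem sum_abs_quadraticRoots : (quadraticRoots.map abs).sum = √17 := by
  have h3 : 3 < √17 := Real.lt_sqrt (by norm_num) |>.mpr (by norm_num)
  simp only [quadraticRoots, Multiset.insert_eq_cons, Multiset.map_cons, Multiset.map_singleton,
    Multiset.sum_cons, Multiset.sum_singleton]
  rw [abs_of_pos (by linarith), abs_of_neg (by linarith)]
  ring

theorem charpoly_adjMat_graphE₁ : (adjMat graphE₁).charpoly =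
    ((({0, 1, -1, -1, -2} : Multiset ℝ) + quadraticRoots).map fun a => X - C a).prod := by
  rw [charpoly_adjMat_eq_map, charpoly_adjMatrix_graphE₁, Multiset.map_add,
    Multiset.prod_add, prod_X_sub_C_quadraticRoots]
  simp only [Polynomial.map_mul, Polynomial.map_sub, Polynomial.map_add, Polynomial.map_pow,
    Polynomial.map_ofNat, map_X, Polynomial.map_one, Multiset.insert_eq_cons, Multiset.map_cons,
    Multiset.map_singleton, Multiset.prod_cons, Multiset.prod_singleton, map_zero, map_one,
    map_neg, map_ofNat]
  ring

theorem charpoly_adjMat_compl_graphE₁ : (adjMat graphE₁ᶜ).charpoly =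
    ((({0, 0, 1, -2, -2} : Multiset ℝ) + quadraticRoots).map fun a => X - C a).prod := by
  rw [charpoly_adjMat_eq_map, charpoly_adjMatrix_compl_graphE₁, Multiset.map_add,
    Multiset.prod_add, prod_X_sub_C_quadraticRoots]
  simp only [Polynomial.map_mul, Polynomial.map_sub, Polynomial.map_add, Polynomial.map_pow,
    Polynomial.map_ofNat, map_X, Polynomial.map_one, Multiset.insert_eq_cons, Multiset.map_cons,
    Multiset.map_singleton, Multiset.prod_cons, Multiset.prod_singleton, map_zero, map_one,
    map_neg, map_ofNat]
  ring

/-- There is a graph `E₁` on 7 vertices, not isomorphic to its complement, not cospectral with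
its complement, with `E(E₁) = E(E₁ᶜ) = 5 + √17`. -/
theorem exists_complementary_equienergetic_seven :
    ∃ E₁ : SimpleGraph (Fin 7),
      ¬ Nonempty (E₁ ≃g E₁ᶜ) ∧
      (adjMat E₁).charpoly ≠ (adjMat E₁ᶜ).charpoly ∧
      energy E₁ = 5 + Real.sqrt 17 ∧ energy E₁ᶜ = 5 + Real.sqrt 17 := by
  refine ⟨graphE₁, graphE₁.not_nonempty_iso_compl_of_odd (by decide), ?_, ?_, ?_⟩
  · rw [charpoly_adjMat_eq_map, charpoly_adjMat_eq_map, charpoly_adjMatrix_graphE₁,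
      charpoly_adjMatrix_compl_graphE₁]
    refine (Polynomial.map_injective _ Int.cast_injective).ne fun h => ?_
    simpa using congrArg (eval (-1)) h
  · rw [energy_eq_sum_abs_of_charpoly_eq _ charpoly_adjMat_graphE₁, Multiset.map_add,
      Multiset.sum_add, sum_abs_quadraticRoots]
    norm_num
  · rw [energy_eq_sum_abs_of_charpoly_eq _ charpoly_adjMat_compl_graphE₁, Multiset.map_add,
      Multiset.sum_add, sum_abs_quadraticRoots]
    norm_num
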